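/- arXiv:2308.09855 — 3 statements merged into one kernel-verified Lean document; each statement's English description precedes it below -/
import Mathlib

section
/- For a finite complex Borel measure ν with compact support in ℂ and any 0 < s < 2, the Cauchy transform Cν belongs to L^s_loc(ℂ) with respect to Lebesgue (area) measure. -/
open MeasureTheory Metric

open scoped ENNReal NNReal

/-- The integral of `‖z‖ ^ (-t)` over the unit ball in `ℂ` is finite when `t < 2`. -/
lemma aux_ball_lintegral_lt_top {t : ℝ} (ht0 : 0 ≤ t) (ht2 : t < 2) :
    ∫⁻ z in ball (0 : ℂ) 1, ((‖z‖₊ : ℝ≥0∞))⁻¹ ^ t < ⊤ := by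
  set f : ℂ → ℝ≥0∞ := fun z => ((‖z‖₊ : ℝ≥0∞))⁻¹ ^ t with hf
  set S : ℕ → Set ℂ := fun n => ball (0 : ℂ) ((1/2 : ℝ) ^ n) \ ball 0 ((1/2 : ℝ) ^ (n+1))
    with hS
  -- covering of the punctured ball by dyadic annuli
  have hsub : ball (0 : ℂ) 1 ⊆ {0} ∪ ⋃ n, S n := by
    intro z hz
    rcases eq_or_ne z 0 with rfl | hz0
    · exact Set.mem_union_left _ rfl
    · have h1 : ‖z‖ < 1 := mem_ball_zero_iff.mp hz
      have hpos : 0 < ‖z‖ := norm_pos_iff.mpr hz0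
      have hex : ∃ n : ℕ, (1/2 : ℝ) ^ (n + 1) ≤ ‖z‖ := by
        obtain ⟨n, hn⟩ := exists_pow_lt_of_lt_one hpos (by norm_num : (1/2 : ℝ) < 1)
        exact ⟨n, le_trans (pow_le_pow_of_le_one (by norm_num) (by norm_num)
          (Nat.le_succ n)) hn.le⟩
      refine Set.mem_union_right _ (Set.mem_iUnion.mpr ⟨Nat.find hex, ?_, ?_⟩)
      · rw [mem_ball_zero_iff]
        rcases Nat.eq_zero_or_pos (Nat.find hex) with h0 | h0
        · rw [h0]; simpa using h1
        · have := Nat.find_min hex (Nat.sub_lt h0 one_pos)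
          push_neg at this
          have h' : Nat.find hex - 1 + 1 = Nat.find hex := Nat.succ_pred_eq_of_pos h0
          rwa [h'] at this
      · simp only [mem_ball_zero_iff, not_lt]
        exact Nat.find_spec hex
  calc ∫⁻ z in ball (0 : ℂ) 1, f z
      ≤ ∫⁻ z in ({0} ∪ ⋃ n, S n : Set ℂ), f z := lintegral_mono_set hsub
    _ ≤ (∫⁻ z in ({0} : Set ℂ), f z) + ∫⁻ z in (⋃ n, S n), f z := lintegral_union_le _ _ _
    _ = ∫⁻ z in (⋃ n, S n), f z := by
        rw [setLIntegral_measure_zero _ _ (measure_singleton 0), zero_add]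
    _ ≤ ∑' n, ∫⁻ z in S n, f z := lintegral_iUnion_le _ _
    _ ≤ ∑' n, ENNReal.ofReal (2 ^ t) * NNReal.pi * (ENNReal.ofReal ((2:ℝ) ^ (t-2))) ^ n := by
        refine ENNReal.tsum_le_tsum fun n => ?_
        have hSn : MeasurableSet (S n) := measurableSet_ball.diff measurableSet_ball
        have hb : ∀ z ∈ S n, f z ≤ ENNReal.ofReal (((1/2 : ℝ) ^ (n+1))⁻¹ ^ t) := by
          intro z hz
          have hz1 : (1/2 : ℝ) ^ (n+1) ≤ ‖z‖ := by
            have := hz.2; rw [mem_ball_zero_iff, not_lt] at this; exact this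
          have hzp : (0:ℝ) < (1/2 : ℝ) ^ (n+1) := by positivity
          have h1 : ENNReal.ofReal ((1/2 : ℝ) ^ (n+1)) ≤ (‖z‖₊ : ℝ≥0∞) := by
            rw [← enorm_eq_nnnorm, ← ofReal_norm]
            exact ENNReal.ofReal_le_ofReal hz1
          have h2 : ((‖z‖₊ : ℝ≥0∞))⁻¹ ≤ (ENNReal.ofReal ((1/2 : ℝ) ^ (n+1)))⁻¹ :=
            ENNReal.inv_le_inv' h1
          calc f z ≤ ((ENNReal.ofReal ((1/2 : ℝ) ^ (n+1)))⁻¹) ^ t :=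
                ENNReal.rpow_le_rpow h2 ht0
            _ = ENNReal.ofReal (((1/2 : ℝ) ^ (n+1))⁻¹ ^ t) := by
                rw [← ENNReal.ofReal_inv_of_pos hzp,
                  ← ENNReal.ofReal_rpow_of_pos (by positivity)]
        calc ∫⁻ z in S n, f z
            ≤ ∫⁻ _ in S n, ENNReal.ofReal (((1/2 : ℝ) ^ (n+1))⁻¹ ^ t) :=
              setLIntegral_mono' hSn hb
          _ = ENNReal.ofReal (((1/2 : ℝ) ^ (n+1))⁻¹ ^ t) * volume (S n) :=
              setLIntegral_const _ _
          _ ≤ ENNReal.ofReal (((1/2 : ℝ) ^ (n+1))⁻¹ ^ t) * volume (ball (0:ℂ) ((1/2 : ℝ) ^ n)) :=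
              by gcongr; exact Set.diff_subset
          _ = ENNReal.ofReal (((1/2 : ℝ) ^ (n+1))⁻¹ ^ t) *
                (ENNReal.ofReal ((1/2 : ℝ) ^ n) ^ 2 * NNReal.pi) := by
              rw [Complex.volume_ball]
          _ = ENNReal.ofReal (2 ^ t) * NNReal.pi * (ENNReal.ofReal ((2:ℝ) ^ (t-2))) ^ n := by
              have h2 : (0:ℝ) < 2 := by norm_num
              have key : ((1/2:ℝ) ^ (n+1))⁻¹ ^ t * ((1/2:ℝ) ^ n) ^ 2
                  = 2 ^ t * ((2:ℝ) ^ (t-2)) ^ n := by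
                have e1 : ((1/2 : ℝ) ^ (n+1))⁻¹ = (2:ℝ) ^ ((n:ℝ) + 1) := by
                  rw [one_div, inv_pow, inv_inv, ← Real.rpow_natCast 2 (n+1)]
                  push_cast; ring_nf
                have e2 : ((1/2 : ℝ) ^ n) = (2:ℝ) ^ (-(n:ℝ)) := by
                  rw [one_div, inv_pow, ← Real.rpow_natCast 2 n, ← Real.rpow_neg h2.le]
                rw [e1, e2, ← Real.rpow_natCast ((2:ℝ) ^ ((t:ℝ) - 2)) n,
                  ← Real.rpow_natCast ((2:ℝ) ^ (-(n:ℝ))) 2,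
                  ← Real.rpow_mul h2.le, ← Real.rpow_mul h2.le, ← Real.rpow_mul h2.le]
                rw [← Real.rpow_add h2, ← Real.rpow_add h2]
                congr 1
                push_cast
                ring
              rw [← ENNReal.ofReal_pow (by positivity), ← ENNReal.ofReal_pow (by positivity),
                ← mul_assoc, ← ENNReal.ofReal_mul (by positivity), key,
                ENNReal.ofReal_mul (by positivity)]
              ring
    _ < ⊤ := by
        rw [ENNReal.tsum_mul_left, ENNReal.tsum_geometric]
        refine ENNReal.mul_lt_top (ENNReal.mul_lt_top ENNReal.ofReal_lt_top ENNReal.coe_lt_top) ?_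
        rw [ENNReal.inv_lt_top]
        have : ENNReal.ofReal ((2:ℝ) ^ (t-2)) < 1 := by
          rw [← ENNReal.ofReal_one]
          exact ENNReal.ofReal_lt_ofReal_iff_of_nonneg (by positivity) |>.mpr
            (Real.rpow_lt_one_of_one_lt_of_neg (by norm_num) (by linarith))
        exact tsub_pos_of_lt this

/-- For a finite complex Borel measure ν with compact support
(represented via its polar decomposition ν = g·μ with μ = |ν| a finite positive
compactly supported measure and |g| = 1 μ-a.e.) and any 0 < s < 2, the Cauchy
transform Cν(z) = ∫ (w - z)⁻¹ dν(w) belongs to L^s_loc(ℂ) with respect to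
planar Lebesgue measure: |Cν|^s is integrable on every compact subset of ℂ. -/
theorem cauchyTransform_mem_Lsloc
    (μ : Measure ℂ) [IsFiniteMeasure μ]
    (hsupp : ∃ K : Set ℂ, IsCompact K ∧ μ Kᶜ = 0)
    (g : ℂ → ℂ) (hg : Measurable g) (hg1 : ∀ᵐ w ∂μ, ‖g w‖ = 1)
    (s : ℝ) (hs0 : 0 < s) (hs2 : s < 2) :
    ∀ Q : Set ℂ, IsCompact Q →
      IntegrableOn (fun z => ‖∫ w, g w / (w - z) ∂μ‖ ^ s) Q volume := by
  intro Q hQ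
  set t : ℝ := max s (3/2) with htdef
  have ht1 : 1 < t := lt_max_of_lt_right (by norm_num)
  have ht0 : (0:ℝ) < t := by linarith
  have ht2 : t < 2 := max_lt hs2 (by norm_num)
  have hst : s ≤ t := le_max_left _ _
  set C : ℂ → ℂ := fun z => ∫ w, g w / (w - z) ∂μ with hCdef
  -- measurability of the Cauchy transform
  have hCm : StronglyMeasurable C := by
    apply MeasureTheory.StronglyMeasurable.integral_prod_right'
      (f := fun p : ℂ × ℂ => g p.2 / (p.2 - p.1))
    exact ((hg.comp measurable_snd).div (measurable_snd.sub measurable_fst)).stronglyMeasurable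
  have hQvol : volume Q < ⊤ := hQ.measure_lt_top
  -- pointwise bound on the Cauchy transform
  have hA : ∀ z : ℂ, (‖C z‖₊ : ℝ≥0∞) ≤ ∫⁻ w, ((‖w - z‖₊ : ℝ≥0∞))⁻¹ ∂μ := by
    intro z
    refine le_trans (enorm_integral_le_lintegral_enorm _) (lintegral_mono_ae ?_)
    filter_upwards [hg1] with w hw
    have hgw : ‖g w‖₊ = 1 := by
      rw [← NNReal.coe_inj, coe_nnnorm, NNReal.coe_one]; exact hw
    rw [enorm_eq_nnnorm, nnnorm_div, div_eq_mul_inv, hgw, one_mul]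
    exact ENNReal.coe_inv_le
  -- Hölder's inequality
  have hmeas_h : ∀ z : ℂ, Measurable fun w : ℂ => ((‖w - z‖₊ : ℝ≥0∞))⁻¹ := fun z =>
    ((measurable_id.sub_const z).nnnorm.coe_nnreal_ennreal).inv
  have hB : ∀ z : ℂ, (∫⁻ w, ((‖w - z‖₊ : ℝ≥0∞))⁻¹ ∂μ) ^ t
      ≤ (μ Set.univ) ^ (t - 1) * ∫⁻ w, (((‖w - z‖₊ : ℝ≥0∞))⁻¹) ^ t ∂μ := by
    intro z
    have hpq : t.HolderConjugate (t / (t - 1)) := .conjExponent ht1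
    have h := ENNReal.lintegral_mul_le_Lp_mul_Lq μ hpq ((hmeas_h z).aemeasurable)
      (aemeasurable_const (b := (1 : ℝ≥0∞)))
    simp only [Pi.mul_apply, mul_one, ENNReal.one_rpow, lintegral_const, one_mul] at h
    have h2 := ENNReal.rpow_le_rpow h ht0.le
    rw [ENNReal.mul_rpow_of_nonneg _ _ ht0.le, ← ENNReal.rpow_mul, ← ENNReal.rpow_mul,
      one_div, inv_mul_cancel₀ (ne_of_gt ht0), ENNReal.rpow_one] at h2
    have hq : 1 / (t / (t - 1)) * t = t - 1 := by
      have : t - 1 ≠ 0 := by intro h'; rw [sub_eq_zero] at h'; exact (ne_of_gt ht1) h'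
      field_simp
    rw [hq] at h2
    calc (∫⁻ w, ((‖w - z‖₊ : ℝ≥0∞))⁻¹ ∂μ) ^ t
        ≤ (∫⁻ w, (((‖w - z‖₊ : ℝ≥0∞))⁻¹) ^ t ∂μ) * (μ Set.univ) ^ (t - 1) := h2
      _ = (μ Set.univ) ^ (t - 1) * ∫⁻ w, (((‖w - z‖₊ : ℝ≥0∞))⁻¹) ^ t ∂μ := mul_comm _ _
  -- uniform bound of the inner integral over Q
  set c0 : ℝ≥0∞ := ∫⁻ z in ball (0 : ℂ) 1, ((‖z‖₊ : ℝ≥0∞))⁻¹ ^ t with hc0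
  have hc0top : c0 < ⊤ := aux_ball_lintegral_lt_top ht0.le ht2
  have hinner : ∀ w : ℂ, (∫⁻ z in Q, (((‖w - z‖₊ : ℝ≥0∞))⁻¹) ^ t) ≤ volume Q + c0 := by
    intro w
    have hpt : ∀ z : ℂ, (((‖w - z‖₊ : ℝ≥0∞))⁻¹) ^ t
        ≤ 1 + (ball w 1).indicator (fun z => (((‖w - z‖₊ : ℝ≥0∞))⁻¹) ^ t) z := by
      intro z
      by_cases hz : z ∈ ball w 1
      · rw [Set.indicator_of_mem hz]; exact le_add_self
      · rw [Set.indicator_of_notMem hz, add_zero]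
        have h1 : (1 : ℝ) ≤ ‖w - z‖ := by
          rw [mem_ball, not_lt] at hz
          calc (1 : ℝ) ≤ dist z w := hz
            _ = ‖w - z‖ := by rw [dist_eq_norm, norm_sub_rev]
        have h1' : (1 : ℝ≥0∞) ≤ (‖w - z‖₊ : ℝ≥0∞) := by
          rw [← enorm_eq_nnnorm, ← ofReal_norm, ← ENNReal.ofReal_one]
          exact ENNReal.ofReal_le_ofReal h1
        have hinv : ((‖w - z‖₊ : ℝ≥0∞))⁻¹ ≤ 1 := ENNReal.inv_le_one.mpr h1'
        calc (((‖w - z‖₊ : ℝ≥0∞))⁻¹) ^ t ≤ (1 : ℝ≥0∞) ^ t :=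
              ENNReal.rpow_le_rpow hinv ht0.le
          _ = 1 := ENNReal.one_rpow t
    have htr : ∫⁻ z in ball w 1, (((‖w - z‖₊ : ℝ≥0∞))⁻¹) ^ t = c0 := by
      have hmp : MeasurePreserving (fun z : ℂ => w - z) volume volume :=
        Measure.measurePreserving_sub_left volume w
      have hpre : (fun z : ℂ => w - z) ⁻¹' (ball (0 : ℂ) 1) = ball w 1 := by
        ext z
        simp only [Set.mem_preimage, mem_ball, dist_eq_norm, sub_zero]
        constructor <;> intro h <;> rwa [norm_sub_rev]
      calc ∫⁻ z in ball w 1, (((‖w - z‖₊ : ℝ≥0∞))⁻¹) ^ t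
          = ∫⁻ z in (fun z : ℂ => w - z) ⁻¹' (ball (0 : ℂ) 1),
              (((‖w - z‖₊ : ℝ≥0∞))⁻¹) ^ t := by rw [hpre]
        _ = ∫⁻ y in ball (0 : ℂ) 1, ((‖y‖₊ : ℝ≥0∞))⁻¹ ^ t :=
            hmp.setLIntegral_comp_preimage_emb
              (MeasurableEquiv.subLeft w).measurableEmbedding
              (fun y => ((‖y‖₊ : ℝ≥0∞))⁻¹ ^ t) (ball (0 : ℂ) 1)
    calc ∫⁻ z in Q, (((‖w - z‖₊ : ℝ≥0∞))⁻¹) ^ t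
        ≤ ∫⁻ z in Q, (1 + (ball w 1).indicator
            (fun z => (((‖w - z‖₊ : ℝ≥0∞))⁻¹) ^ t) z) := lintegral_mono hpt
      _ = (∫⁻ _ in Q, (1 : ℝ≥0∞)) + ∫⁻ z in Q, (ball w 1).indicator
            (fun z => (((‖w - z‖₊ : ℝ≥0∞))⁻¹) ^ t) z := lintegral_add_left measurable_const _
      _ ≤ volume Q + ∫⁻ z, (ball w 1).indicator
            (fun z => (((‖w - z‖₊ : ℝ≥0∞))⁻¹) ^ t) z := by
          gcongr
          · rw [setLIntegral_const, one_mul]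
          · exact Measure.restrict_le_self
      _ = volume Q + ∫⁻ z in ball w 1, (((‖w - z‖₊ : ℝ≥0∞))⁻¹) ^ t := by
          rw [lintegral_indicator measurableSet_ball]
      _ = volume Q + c0 := by rw [htr]
  -- finiteness of the t-integral
  have hfin : ∫⁻ z in Q, ((‖C z‖₊ : ℝ≥0∞)) ^ t < ⊤ := by
    have hum : Measurable (fun p : ℂ × ℂ => (((‖p.2 - p.1‖₊ : ℝ≥0∞))⁻¹) ^ t) :=
      (((measurable_snd.sub measurable_fst).nnnorm.coe_nnreal_ennreal).inv).pow_const t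
    have hswap : ∫⁻ z in Q, ∫⁻ w, (((‖w - z‖₊ : ℝ≥0∞))⁻¹) ^ t ∂μ
        = ∫⁻ w, (∫⁻ z in Q, (((‖w - z‖₊ : ℝ≥0∞))⁻¹) ^ t) ∂μ :=
      lintegral_lintegral_swap hum.aemeasurable
    have hμu : (μ Set.univ) ^ (t - 1) ≠ ⊤ :=
      (ENNReal.rpow_lt_top_of_nonneg (by linarith) (measure_ne_top μ _)).ne
    calc ∫⁻ z in Q, ((‖C z‖₊ : ℝ≥0∞)) ^ t
        ≤ ∫⁻ z in Q, (μ Set.univ) ^ (t - 1) * ∫⁻ w, (((‖w - z‖₊ : ℝ≥0∞))⁻¹) ^ t ∂μ := by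
          refine lintegral_mono fun z => ?_
          exact le_trans (ENNReal.rpow_le_rpow (hA z) ht0.le) (hB z)
      _ = (μ Set.univ) ^ (t - 1) * ∫⁻ z in Q, ∫⁻ w, (((‖w - z‖₊ : ℝ≥0∞))⁻¹) ^ t ∂μ :=
          lintegral_const_mul' _ _ hμu
      _ = (μ Set.univ) ^ (t - 1) * ∫⁻ w, (∫⁻ z in Q, (((‖w - z‖₊ : ℝ≥0∞))⁻¹) ^ t) ∂μ := by
          rw [hswap]
      _ ≤ (μ Set.univ) ^ (t - 1) * ∫⁻ _, (volume Q + c0) ∂μ := by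
          gcongr
          exact hinner _
      _ = (μ Set.univ) ^ (t - 1) * ((volume Q + c0) * μ Set.univ) := by rw [lintegral_const]
      _ < ⊤ := by
          refine ENNReal.mul_lt_top hμu.lt_top (ENNReal.mul_lt_top ?_ (measure_lt_top μ _))
          exact ENNReal.add_lt_top.mpr ⟨hQvol, hc0top⟩
  -- conclusion
  refine ⟨(hCm.measurable.norm.pow_const s).aestronglyMeasurable, ?_⟩
  rw [hasFiniteIntegral_iff_norm]
  calc ∫⁻ z in Q, ENNReal.ofReal ‖(‖C z‖ ^ s)‖
      = ∫⁻ z in Q, ((‖C z‖₊ : ℝ≥0∞)) ^ s := by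
        refine lintegral_congr fun z => ?_
        rw [Real.norm_eq_abs, abs_of_nonneg (Real.rpow_nonneg (norm_nonneg _) s),
          ← enorm_eq_nnnorm, ← ofReal_norm, ENNReal.ofReal_rpow_of_nonneg (norm_nonneg _) hs0.le]
    _ ≤ ∫⁻ z in Q, (1 + ((‖C z‖₊ : ℝ≥0∞)) ^ t) := by
        refine lintegral_mono fun z => ?_
        by_cases hx : (‖C z‖₊ : ℝ≥0∞) ≤ 1
        · calc ((‖C z‖₊ : ℝ≥0∞)) ^ s ≤ (1 : ℝ≥0∞) ^ s := ENNReal.rpow_le_rpow hx hs0.le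
            _ = 1 := ENNReal.one_rpow s
            _ ≤ 1 + ((‖C z‖₊ : ℝ≥0∞)) ^ t := le_self_add
        · push_neg at hx
          calc ((‖C z‖₊ : ℝ≥0∞)) ^ s ≤ ((‖C z‖₊ : ℝ≥0∞)) ^ t :=
              ENNReal.rpow_le_rpow_of_exponent_le hx.le hst
            _ ≤ 1 + ((‖C z‖₊ : ℝ≥0∞)) ^ t := le_add_self
    _ = (∫⁻ _ in Q, (1 : ℝ≥0∞)) + ∫⁻ z in Q, ((‖C z‖₊ : ℝ≥0∞)) ^ t :=
        lintegral_add_left measurable_const _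
    _ < ⊤ := by
        rw [setLIntegral_const, one_mul]
        exact ENNReal.add_lt_top.mpr ⟨hQvol, hfin⟩
end

section
/- Let W : ℂ → [0,∞) be measurable with compact support, g ∈ L²(W dA), and let λ, μ ∈ ℂ satisfy W(z) ≤ |z - λ|⁴ and W(z) ≤ |z - μ|⁴ for all z. If ∫ W dA ≤ π, then |C(gW dA)(λ) - C(gW dA)(μ)| ≤ |λ - μ| · (∫ |z-λ|⁻⁴ W dA)^{1/4} · (∫ |z-μ|⁻⁴ W dA)^{1/4} · ‖g‖_{L²(W dA)}. -/
open MeasureTheory Metric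
open scoped ENNReal

/-- Auxiliary: a lintegral against `W dA` is finite if the integrand times `W`
is uniformly bounded on the (compact) support of `W`. -/
private lemma aux_lintegral_lt_top {W : ℂ → ℝ} (hWm : Measurable W)
    (hWsupp : HasCompactSupport W)
    {φ : ℂ → ℝ≥0∞} (hφ : Measurable φ) (c : ℝ)
    (hb : ∀ z ∈ tsupport W, φ z * ENNReal.ofReal (W z) ≤ ENNReal.ofReal c) :
    ∫⁻ z, φ z ∂(volume.withDensity fun z => ENNReal.ofReal (W z)) < ⊤ := by
  rw [lintegral_withDensity_eq_lintegral_mul _ hWm.ennreal_ofReal hφ]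
  have hK : MeasurableSet (tsupport W) := (isClosed_tsupport W).measurableSet
  calc ∫⁻ z, ((fun z => ENNReal.ofReal (W z)) * φ) z ∂volume
      ≤ ∫⁻ z, (tsupport W).indicator (fun _ => ENNReal.ofReal c) z ∂volume := by
        refine lintegral_mono fun z => ?_
        by_cases hz : z ∈ tsupport W
        · rw [Set.indicator_of_mem hz]
          simpa [mul_comm] using hb z hz
        · rw [Set.indicator_of_notMem hz]
          simp [image_eq_zero_of_notMem_tsupport hz]
    _ = ENNReal.ofReal c * volume (tsupport W) := by
        rw [lintegral_indicator hK, setLIntegral_const]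
    _ < ⊤ := ENNReal.mul_lt_top ENNReal.ofReal_lt_top hWsupp.isCompact.measure_lt_top

/-- Auxiliary: a `Memℒp` criterion with respect to `W dA`. -/
private lemma aux_memLp {W : ℂ → ℝ} (hWm : Measurable W)
    (hWsupp : HasCompactSupport W)
    {E : Type*} [NormedAddCommGroup E] {f : ℂ → E}
    (hfm : Measurable fun z => ‖f z‖) (hfsm : AEStronglyMeasurable f
      (volume.withDensity fun z => ENNReal.ofReal (W z)))
    {p : ℝ} (hp0 : 0 < p) (c : ℝ)
    (hb : ∀ z ∈ tsupport W, ‖f z‖ ^ p * W z ≤ c) :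
    MemLp f (ENNReal.ofReal p) (volume.withDensity fun z => ENNReal.ofReal (W z)) := by
  refine ⟨hfsm, ?_⟩
  have hp0' : ENNReal.ofReal p ≠ 0 := by
    simpa [ENNReal.ofReal_eq_zero, not_le] using hp0
  rw [eLpNorm_eq_lintegral_rpow_enorm_toReal hp0' ENNReal.ofReal_ne_top,
    ENNReal.toReal_ofReal hp0.le]
  refine ENNReal.rpow_lt_top_of_nonneg (by positivity) ?_
  have hfm' : Measurable fun z => (‖f z‖₊ : ℝ≥0∞) := by
    simpa only [ofReal_norm, enorm_eq_nnnorm] using hfm.ennreal_ofReal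
  refine (aux_lintegral_lt_top hWm hWsupp (φ := fun z => (‖f z‖₊ : ℝ≥0∞) ^ p)
    (hfm'.pow_const _) c fun z hz => ?_).ne
  have h1 : ((‖f z‖₊ : ℝ≥0∞)) ^ p = ENNReal.ofReal (‖f z‖ ^ p) := by
    rw [← enorm_eq_nnnorm, ← ofReal_norm, ← ENNReal.ofReal_rpow_of_nonneg (norm_nonneg _) hp0.le]
  show (‖f z‖₊ : ℝ≥0∞) ^ p * ENNReal.ofReal (W z) ≤ ENNReal.ofReal c
  rw [h1, ← ENNReal.ofReal_mul (by positivity)]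
  exact ENNReal.ofReal_le_ofReal (hb z hz)

set_option maxHeartbeats 2000000 in
/-- If W : ℂ → [0,∞) is measurable with compact support,
g ∈ L²(W dA), λ, μ ∈ ℂ satisfy W(z) ≤ |z-λ|⁴ and W(z) ≤ |z-μ|⁴ for all z, and
∫ W dA ≤ π, then
|C(gWdA)(λ) - C(gWdA)(μ)| ≤ |λ-μ| (∫|z-λ|⁻⁴ W dA)^{1/4} (∫|z-μ|⁻⁴ W dA)^{1/4} ‖g‖. -/
theorem cauchyTransform_lipschitz_bound
    (W : ℂ → ℝ) (hWm : Measurable W) (hW0 : ∀ z, 0 ≤ W z)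
    (hWsupp : HasCompactSupport W)
    (μW : Measure ℂ) (hμW : μW = volume.withDensity fun z => ENNReal.ofReal (W z))
    (g : ℂ → ℂ) (hg : MemLp g 2 μW)
    (lam mu : ℂ)
    (hWlam : ∀ z, W z ≤ ‖z - lam‖ ^ 4) (hWmu : ∀ z, W z ≤ ‖z - mu‖ ^ 4)
    (hWpi : ∫⁻ z, ENNReal.ofReal (W z) ∂volume ≤ ENNReal.ofReal Real.pi) :
    ‖(∫ z, g z / (z - lam) ∂μW) - ∫ z, g z / (z - mu) ∂μW‖ ≤
      ‖lam - mu‖ * (∫ z, ‖z - lam‖⁻¹ ^ 4 ∂μW) ^ ((1 : ℝ) / 4) *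
        (∫ z, ‖z - mu‖⁻¹ ^ 4 ∂μW) ^ ((1 : ℝ) / 4) * (eLpNorm g 2 μW).toReal := by
  -- notation
  set f1 : ℂ → ℝ := fun z => ‖z - lam‖⁻¹ with hf1def
  set f2 : ℂ → ℝ := fun z => ‖z - mu‖⁻¹ with hf2def
  have hof2 : (2 : ℝ≥0∞) = ENNReal.ofReal 2 := by norm_num
  have hof4 : (4 : ℝ≥0∞) = ENNReal.ofReal 4 := by norm_num
  -- measurability
  have hm1 : Measurable f1 := (measurable_id.sub measurable_const).norm.inv
  have hm2 : Measurable f2 := (measurable_id.sub measurable_const).norm.inv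
  have hminv1 : Measurable fun z : ℂ => (z - lam)⁻¹ :=
    (measurable_id.sub measurable_const).inv
  have hminv2 : Measurable fun z : ℂ => (z - mu)⁻¹ :=
    (measurable_id.sub measurable_const).inv
  -- a bound on the support
  obtain ⟨r₁, hr₁⟩ := hWsupp.isCompact.isBounded.subset_closedBall lam
  obtain ⟨r₂, hr₂⟩ := hWsupp.isCompact.isBounded.subset_closedBall mu
  -- pointwise bound lemma
  have key : ∀ (lam' : ℂ) (r : ℝ), (∀ z, W z ≤ ‖z - lam'‖ ^ 4) →
      (tsupport W ⊆ closedBall lam' r) →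
      ∀ z ∈ tsupport W, ∀ k : ℕ, (k : ℝ) ≤ 4 →
      (‖z - lam'‖⁻¹) ^ (k : ℝ) * W z ≤ (max r 0) ^ (4 - (k:ℝ)) := by
    intro lam' r hWl hsub z hz k hk4
    have hzr : ‖z - lam'‖ ≤ max r 0 := by
      have := hsub hz
      rw [mem_closedBall, dist_eq_norm] at this
      exact le_trans this (le_max_left _ _)
    by_cases hzl : z = lam'
    · have hW0' : W z = 0 := le_antisymm (by simpa [hzl] using hWl lam') (hW0 z)
      rw [hW0', mul_zero]
      positivity
    · have hd : 0 < ‖z - lam'‖ := by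
        rw [norm_pos_iff, sub_ne_zero]; exact hzl
      have h1 : (‖z - lam'‖⁻¹) ^ (k:ℝ) * W z ≤ (‖z - lam'‖⁻¹) ^ (k:ℝ) * ‖z - lam'‖ ^ (4:ℝ) := by
        apply mul_le_mul_of_nonneg_left _ (by positivity)
        calc W z ≤ ‖z - lam'‖ ^ 4 := hWl z
          _ = ‖z - lam'‖ ^ (4:ℝ) := by
              rw [show (4:ℝ) = ((4:ℕ):ℝ) by norm_num, Real.rpow_natCast]
      have h2 : (‖z - lam'‖⁻¹) ^ (k:ℝ) * ‖z - lam'‖ ^ (4:ℝ) = ‖z - lam'‖ ^ ((4:ℝ) - k) := by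
        rw [Real.inv_rpow hd.le, ← Real.rpow_neg hd.le, ← Real.rpow_add hd]
        congr 1
        ring
      calc (‖z - lam'‖⁻¹) ^ (k:ℝ) * W z ≤ ‖z - lam'‖ ^ ((4:ℝ) - k) := h1.trans_eq h2
        _ ≤ (max r 0) ^ ((4:ℝ) - k) :=
            Real.rpow_le_rpow hd.le hzr (by linarith)
  subst hμW
  set μW := volume.withDensity (fun z => ENNReal.ofReal (W z)) with hμW
  -- Memℒp facts
  have hinv1 : MemLp (fun z : ℂ => (z - lam)⁻¹) 2 μW := by
    rw [hof2]
    refine aux_memLp hWm hWsupp hminv1.norm hminv1.aestronglyMeasurable (by norm_num)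
      ((max r₁ 0) ^ ((4:ℝ) - 2)) fun z hz => ?_
    have h := key lam r₁ hWlam hr₁ z hz 2 (by norm_num)
    norm_num [norm_inv] at h ⊢
    exact h
  have hinv2 : MemLp (fun z : ℂ => (z - mu)⁻¹) 2 μW := by
    rw [hof2]
    refine aux_memLp hWm hWsupp hminv2.norm hminv2.aestronglyMeasurable (by norm_num)
      ((max r₂ 0) ^ ((4:ℝ) - 2)) fun z hz => ?_
    have h := key mu r₂ hWmu hr₂ z hz 2 (by norm_num)
    norm_num [norm_inv] at h ⊢
    exact h
  have h1L4 : MemLp f1 4 μW := by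
    rw [hof4]
    refine aux_memLp hWm hWsupp hm1.norm hm1.aestronglyMeasurable (by norm_num)
      ((max r₁ 0) ^ ((4:ℝ) - 4)) fun z hz => ?_
    have h := key lam r₁ hWlam hr₁ z hz 4 (by norm_num)
    have hnn : ‖f1 z‖ = ‖z - lam‖⁻¹ := by
      simp [hf1def, Real.norm_eq_abs, abs_of_nonneg]
    rw [hnn]
    norm_num at h ⊢
    exact h
  have h2L4 : MemLp f2 4 μW := by
    rw [hof4]
    refine aux_memLp hWm hWsupp hm2.norm hm2.aestronglyMeasurable (by norm_num)
      ((max r₂ 0) ^ ((4:ℝ) - 4)) fun z hz => ?_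
    have h := key mu r₂ hWmu hr₂ z hz 4 (by norm_num)
    have hnn : ‖f2 z‖ = ‖z - mu‖⁻¹ := by
      simp [hf2def, Real.norm_eq_abs, abs_of_nonneg]
    rw [hnn]
    norm_num at h ⊢
    exact h
  have h1sq : MemLp (fun z => f1 z ^ 2) 2 μW := by
    rw [hof2]
    refine aux_memLp hWm hWsupp (hm1.pow_const 2).norm
      (hm1.pow_const 2).aestronglyMeasurable (by norm_num)
      ((max r₁ 0) ^ ((4:ℝ) - 4)) fun z hz => ?_
    have h := key lam r₁ hWlam hr₁ z hz 4 (by norm_num)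
    have hnn : ‖f1 z ^ 2‖ ^ (2:ℝ) = (‖z - lam‖⁻¹) ^ ((4:ℕ):ℝ) := by
      have hx : (0:ℝ) ≤ ‖z - lam‖⁻¹ := by positivity
      rw [Real.norm_eq_abs, abs_of_nonneg (by positivity)]
      simp only [hf1def]
      rw [← Real.rpow_natCast (‖z - lam‖⁻¹) 2, ← Real.rpow_mul hx]
      norm_num
    rw [hnn]
    norm_num at h ⊢
    exact h
  have h2sq : MemLp (fun z => f2 z ^ 2) 2 μW := by
    rw [hof2]
    refine aux_memLp hWm hWsupp (hm2.pow_const 2).norm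
      (hm2.pow_const 2).aestronglyMeasurable (by norm_num)
      ((max r₂ 0) ^ ((4:ℝ) - 4)) fun z hz => ?_
    have h := key mu r₂ hWmu hr₂ z hz 4 (by norm_num)
    have hnn : ‖f2 z ^ 2‖ ^ (2:ℝ) = (‖z - mu‖⁻¹) ^ ((4:ℕ):ℝ) := by
      have hx : (0:ℝ) ≤ ‖z - mu‖⁻¹ := by positivity
      rw [Real.norm_eq_abs, abs_of_nonneg (by positivity)]
      simp only [hf2def]
      rw [← Real.rpow_natCast (‖z - mu‖⁻¹) 2, ← Real.rpow_mul hx]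
      norm_num
    rw [hnn]
    norm_num at h ⊢
    exact h
  have hhalf : (1:ℝ≥0∞)/2 = 1/4 + 1/4 := by
    rw [ENNReal.div_add_div_same, ENNReal.div_eq_div_iff] <;> norm_num
  have hone : (1:ℝ≥0∞)/1 = 1/2 + 1/2 := by
    rw [ENNReal.div_add_div_same, ENNReal.div_eq_div_iff] <;> norm_num
  have hf12 : MemLp (fun z => f1 z * f2 z) 2 μW := by
    have h : MemLp (f1 • f2) 2 μW := h2L4.smul h1L4 (hpqr := ⟨by simpa only [one_div] using hhalf.symm⟩)
    exact MemLp.ae_eq (Filter.Eventually.of_forall fun z => rfl) h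
  -- integrability of the two Cauchy integrands
  have hF1 : Integrable (fun z => g z / (z - lam)) μW := by
    have h := memLp_one_iff_integrable.mp (hg.smul hinv1 (hpqr := ⟨by simpa only [one_div] using hone.symm⟩))
    refine h.congr (Filter.Eventually.of_forall fun z => ?_)
    simp [div_eq_mul_inv, mul_comm]
  have hF2 : Integrable (fun z => g z / (z - mu)) μW := by
    have h := memLp_one_iff_integrable.mp (hg.smul hinv2 (hpqr := ⟨by simpa only [one_div] using hone.symm⟩))
    refine h.congr (Filter.Eventually.of_forall fun z => ?_)
    simp [div_eq_mul_inv, mul_comm]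
  have hBint : Integrable (fun z => ‖g z‖ * (f1 z * f2 z)) μW := by
    have h := memLp_one_iff_integrable.mp (hg.norm.smul hf12 (hpqr := ⟨by simpa only [one_div] using hone.symm⟩))
    refine h.congr (Filter.Eventually.of_forall fun z => ?_)
    simp [mul_comm]
  -- a.e. avoidance of lam, mu
  have hne : ∀ᵐ z ∂μW, z ≠ lam ∧ z ≠ mu := by
    have h0 : (volume : Measure ℂ) ({lam} ∪ {mu}) = 0 :=
      measure_union_null (measure_singleton _) (measure_singleton _)
    have h' := (withDensity_absolutelyContinuous (volume : Measure ℂ)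
      (fun z => ENNReal.ofReal (W z))) h0
    refine ae_iff.mpr (measure_mono_null ?_ h')
    intro z hz
    simp only [Set.mem_setOf_eq, not_and_or, not_not, ne_eq] at hz
    rcases hz with h | h <;> simp [h]
  -- pointwise a.e. bound
  have hae : ∀ᵐ z ∂μW, ‖g z / (z - lam) - g z / (z - mu)‖ ≤
      ‖lam - mu‖ * (‖g z‖ * (f1 z * f2 z)) := by
    filter_upwards [hne] with z hz
    obtain ⟨hz1, hz2⟩ := hz
    have e1 : z - lam ≠ 0 := sub_ne_zero.mpr hz1
    have e2 : z - mu ≠ 0 := sub_ne_zero.mpr hz2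
    have hid : g z / (z - lam) - g z / (z - mu) =
        g z * (lam - mu) / ((z - lam) * (z - mu)) := by
      field_simp
      ring
    rw [hid, norm_div, norm_mul, norm_mul]
    apply le_of_eq
    simp only [hf1def, hf2def]
    rw [div_eq_mul_inv, mul_inv]
    ring
  -- Hölder inequalities
  have hconj : Real.HolderConjugate 2 2 := Real.HolderConjugate.two_two
  have hG0 : (0:ℝ) ≤ ∫ z, ‖g z‖ ^ (2:ℝ) ∂μW :=
    integral_nonneg fun z => Real.rpow_nonneg (norm_nonneg _) _
  have hA0 : (0:ℝ) ≤ ∫ z, ‖z - lam‖⁻¹ ^ 4 ∂μW :=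
    integral_nonneg fun z => by positivity
  have hB0 : (0:ℝ) ≤ ∫ z, ‖z - mu‖⁻¹ ^ 4 ∂μW :=
    integral_nonneg fun z => by positivity
  have hP0 : (0:ℝ) ≤ ∫ z, (f1 z * f2 z) ^ (2:ℝ) ∂μW :=
    integral_nonneg fun z => Real.rpow_nonneg (by positivity) _
  have holder1 : ∫ z, ‖g z‖ * (f1 z * f2 z) ∂μW ≤
      (∫ z, ‖g z‖ ^ (2:ℝ) ∂μW) ^ ((1:ℝ)/2) *
        (∫ z, (f1 z * f2 z) ^ (2:ℝ) ∂μW) ^ ((1:ℝ)/2) := by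
    refine integral_mul_le_Lp_mul_Lq_of_nonneg hconj
      (Filter.Eventually.of_forall fun z => norm_nonneg _)
      (Filter.Eventually.of_forall fun z => by positivity) ?_ ?_
    · exact hof2 ▸ hg.norm
    · exact hof2 ▸ hf12
  have holder2 : ∫ z, (f1 z ^ 2) * (f2 z ^ 2) ∂μW ≤
      (∫ z, (f1 z ^ 2) ^ (2:ℝ) ∂μW) ^ ((1:ℝ)/2) *
        (∫ z, (f2 z ^ 2) ^ (2:ℝ) ∂μW) ^ ((1:ℝ)/2) := by
    refine integral_mul_le_Lp_mul_Lq_of_nonneg hconj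
      (Filter.Eventually.of_forall fun z => by positivity)
      (Filter.Eventually.of_forall fun z => by positivity) ?_ ?_
    · exact hof2 ▸ h1sq
    · exact hof2 ▸ h2sq
  -- integrand conversions
  have c1 : ∫ z, (f1 z * f2 z) ^ (2:ℝ) ∂μW = ∫ z, (f1 z ^ 2) * (f2 z ^ 2) ∂μW := by
    refine integral_congr_ae (Filter.Eventually.of_forall fun z => ?_)
    beta_reduce
    rw [show (2:ℝ) = ((2:ℕ):ℝ) by norm_num, Real.rpow_natCast]
    ring
  have c2 : ∫ z, (f1 z ^ 2) ^ (2:ℝ) ∂μW = ∫ z, ‖z - lam‖⁻¹ ^ 4 ∂μW := by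
    refine integral_congr_ae (Filter.Eventually.of_forall fun z => ?_)
    beta_reduce
    rw [show (2:ℝ) = ((2:ℕ):ℝ) by norm_num, Real.rpow_natCast]
    simp only [hf1def]
    ring
  have c3 : ∫ z, (f2 z ^ 2) ^ (2:ℝ) ∂μW = ∫ z, ‖z - mu‖⁻¹ ^ 4 ∂μW := by
    refine integral_congr_ae (Filter.Eventually.of_forall fun z => ?_)
    beta_reduce
    rw [show (2:ℝ) = ((2:ℕ):ℝ) by norm_num, Real.rpow_natCast]
    simp only [hf2def]
    ring
  have cg : (∫ z, ‖g z‖ ^ (2:ℝ) ∂μW) ^ ((1:ℝ)/2) = (eLpNorm g 2 μW).toReal := by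
    rw [hg.eLpNorm_eq_integral_rpow_norm (by norm_num) (by norm_num)]
    rw [ENNReal.toReal_ofReal (Real.rpow_nonneg (integral_nonneg fun z =>
      Real.rpow_nonneg (norm_nonneg _) _) _)]
    norm_num
  -- combine the two Hölder steps
  have hP : (∫ z, (f1 z * f2 z) ^ (2:ℝ) ∂μW) ^ ((1:ℝ)/2) ≤
      (∫ z, ‖z - lam‖⁻¹ ^ 4 ∂μW) ^ ((1:ℝ)/4) *
        (∫ z, ‖z - mu‖⁻¹ ^ 4 ∂μW) ^ ((1:ℝ)/4) := by
    have h1 : ∫ z, (f1 z * f2 z) ^ (2:ℝ) ∂μW ≤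
        (∫ z, ‖z - lam‖⁻¹ ^ 4 ∂μW) ^ ((1:ℝ)/2) *
          (∫ z, ‖z - mu‖⁻¹ ^ 4 ∂μW) ^ ((1:ℝ)/2) := by
      rw [c1]
      calc ∫ z, (f1 z ^ 2) * (f2 z ^ 2) ∂μW ≤ _ := holder2
        _ = _ := by rw [c2, c3]
    calc (∫ z, (f1 z * f2 z) ^ (2:ℝ) ∂μW) ^ ((1:ℝ)/2)
        ≤ ((∫ z, ‖z - lam‖⁻¹ ^ 4 ∂μW) ^ ((1:ℝ)/2) *
            (∫ z, ‖z - mu‖⁻¹ ^ 4 ∂μW) ^ ((1:ℝ)/2)) ^ ((1:ℝ)/2) :=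
          Real.rpow_le_rpow hP0 h1 (by norm_num)
      _ = _ := by
          rw [Real.mul_rpow (Real.rpow_nonneg hA0 _) (Real.rpow_nonneg hB0 _),
            ← Real.rpow_mul hA0, ← Real.rpow_mul hB0]
          norm_num
  -- main chain
  calc ‖(∫ z, g z / (z - lam) ∂μW) - ∫ z, g z / (z - mu) ∂μW‖
      = ‖∫ z, (g z / (z - lam) - g z / (z - mu)) ∂μW‖ := by
        rw [integral_sub hF1 hF2]
    _ ≤ ∫ z, ‖g z / (z - lam) - g z / (z - mu)‖ ∂μW :=
        norm_integral_le_integral_norm _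
    _ ≤ ∫ z, ‖lam - mu‖ * (‖g z‖ * (f1 z * f2 z)) ∂μW :=
        integral_mono_ae (hF1.sub hF2).norm (hBint.const_mul _) hae
    _ = ‖lam - mu‖ * ∫ z, ‖g z‖ * (f1 z * f2 z) ∂μW := integral_const_mul _ _
    _ ≤ ‖lam - mu‖ * ((∫ z, ‖g z‖ ^ (2:ℝ) ∂μW) ^ ((1:ℝ)/2) *
          (∫ z, (f1 z * f2 z) ^ (2:ℝ) ∂μW) ^ ((1:ℝ)/2)) :=
        mul_le_mul_of_nonneg_left holder1 (norm_nonneg _)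
    _ ≤ ‖lam - mu‖ * ((∫ z, ‖g z‖ ^ (2:ℝ) ∂μW) ^ ((1:ℝ)/2) *
          ((∫ z, ‖z - lam‖⁻¹ ^ 4 ∂μW) ^ ((1:ℝ)/4) *
            (∫ z, ‖z - mu‖⁻¹ ^ 4 ∂μW) ^ ((1:ℝ)/4))) := by
        gcongr
    _ = ‖lam - mu‖ * (∫ z, ‖z - lam‖⁻¹ ^ 4 ∂μW) ^ ((1:ℝ)/4) *
          (∫ z, ‖z - mu‖⁻¹ ^ 4 ∂μW) ^ ((1:ℝ)/4) * (eLpNorm g 2 μW).toReal := by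
        rw [← cg]
        ring
end

section
/- Let K ⊂ ℂ be compact, μ a positive finite Borel measure on K, and suppose g ∈ L¹(μ) satisfies ∫ h g dμ = 0 for every rational function h with poles off K, with |g| = 1/(2π) μ-almost everywhere. Then R^∞(K, μ), the weak-star closure of Rat(K) in L^∞(μ), contains no nonzero characteristic function χ_Δ with μ(Δ) > 0 and μ(K∖Δ) > 0 such that χ_Δ · R^∞(K,μ) ⊆ R^∞(K,μ) gives a direct L^∞ summand; i.e., R^∞(K,μ) is pure. -/
open MeasureTheory

/-- `RatK K f` : `f` agrees on `K` with a rational function whose poles lie off `K`. -/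
def RatK (K : Set ℂ) (f : ℂ → ℂ) : Prop :=
  ∃ p q : Polynomial ℂ, (∀ z ∈ K, q.eval z ≠ 0) ∧ ∀ z ∈ K, f z = p.eval z / q.eval z

/-- `MemRinf K μ f` : `f` belongs to `R^∞(K,μ)`, the weak-star closure of `Rat(K)`
in `L^∞(μ)`; membership is expressed by essential boundedness together with
approximability of all finite families of `L¹(μ)`-pairings by rational functions
(the basic weak-star neighborhoods). -/
def MemRinf (K : Set ℂ) (μ : Measure ℂ) (f : ℂ → ℂ) : Prop :=
  AEStronglyMeasurable f μ ∧ (∃ C, ∀ᵐ z ∂μ, ‖f z‖ ≤ C) ∧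
    ∀ (n : ℕ) (g : Fin n → ℂ → ℂ), (∀ i, Integrable (g i) μ) →
      ∀ ε > 0, ∃ rat : ℂ → ℂ, RatK K rat ∧
        ∀ i, ‖∫ z, (f z - rat z) * g i z ∂μ‖ < ε

/-- `MemR2 K μ f` : `f` belongs to `R²(K,μ)`, the closure of `Rat(K)` in `L²(μ)`. -/
def MemR2 (K : Set ℂ) (μ : Measure ℂ) (f : ℂ → ℂ) : Prop :=
  MemLp f 2 μ ∧ ∀ ε > 0, ∃ rat : ℂ → ℂ, RatK K rat ∧
    eLpNorm (fun z => f z - rat z) 2 μ < ENNReal.ofReal ε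

/-- `RinfPure K μ` : `R^∞(K,μ)` has no non-trivial direct `L^∞` summand: there is
no set `Δ` of positive measure whose characteristic function lies in `R^∞(K,μ)`
and with `χ_Δ · L^∞(μ) ⊆ R^∞(K,μ)`. -/
def RinfPure (K : Set ℂ) (μ : Measure ℂ) : Prop :=
  ¬ ∃ Δ : Set ℂ, MeasurableSet Δ ∧ 0 < μ Δ ∧
      MemRinf K μ (Set.indicator Δ 1) ∧
      ∀ b : ℂ → ℂ, Measurable b → (∃ C, ∀ z, ‖b z‖ ≤ C) →
        MemRinf K μ (Set.indicator Δ b)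

/-- If `K ⊂ ℂ` is compact, `μ` a positive finite Borel measure on `K`,
and `g ∈ L¹(μ)` annihilates `Rat(K)` with `|g| = 1/(2π)` μ-a.e., then `R^∞(K,μ)`
contains no characteristic function `χ_Δ` with `μ(Δ) > 0` and `μ(K∖Δ) > 0` giving a
direct `L^∞` summand; i.e. `R^∞(K,μ)` is pure. -/
theorem Rinf_pure_of_annihilator
    (K : Set ℂ) (hK : IsCompact K)
    (μ : Measure ℂ) [IsFiniteMeasure μ] (hμK : μ Kᶜ = 0) (hμ0 : μ ≠ 0)
    (g : ℂ → ℂ) (hg : Integrable g μ)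
    (hann : ∀ h : ℂ → ℂ, RatK K h → ∫ z, h z * g z ∂μ = 0)
    (hmod : ∀ᵐ z ∂μ, ‖g z‖ = 1 / (2 * Real.pi)) :
    ¬ ∃ Δ : Set ℂ, MeasurableSet Δ ∧ 0 < μ Δ ∧ 0 < μ (K \ Δ) ∧
        MemRinf K μ (Set.indicator Δ 1) ∧
        ∀ b : ℂ → ℂ, Measurable b → (∃ C, ∀ z, ‖b z‖ ≤ C) →
          MemRinf K μ (Set.indicator Δ b) := by
  rintro ⟨Δ, hΔm, hΔpos, -, -, hall⟩
  -- a.e. point lies in K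
  have haeK : ∀ᵐ z ∂μ, z ∈ K := by
    rw [MeasureTheory.ae_iff]
    exact hμK
  -- measurable version of g
  set g₁ := hg.1.mk g with hg₁def
  have hg₁meas : Measurable g₁ := hg.1.stronglyMeasurable_mk.measurable
  have hgg₁ : g =ᵐ[μ] g₁ := hg.1.ae_eq_mk
  -- bounded measurable multiplier
  set b : ℂ → ℂ := fun z => if ‖g₁ z‖ ≤ 1 then (starRingEnd ℂ) (g₁ z) else 0 with hbdef
  have hbmeas : Measurable b := by
    apply Measurable.ite (measurableSet_le hg₁meas.norm measurable_const)
    · exact Complex.continuous_conj.measurable.comp hg₁meas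
    · exact measurable_const
  have hbbd : ∀ z, ‖b z‖ ≤ 1 := by
    intro z
    simp only [hbdef]
    split_ifs with h
    · simpa using h
    · simp
  set f : ℂ → ℂ := Set.indicator Δ b with hfdef
  have hfRinf : MemRinf K μ f := hall b hbmeas ⟨1, hbbd⟩
  have hfmeas : Measurable f := hbmeas.indicator hΔm
  have hfbd : ∀ z, ‖f z‖ ≤ 1 := by
    intro z
    by_cases h : z ∈ Δ
    · rw [hfdef, Set.indicator_of_mem h]; exact hbbd z
    · simp [hfdef, Set.indicator_of_notMem h]
  -- integrability of f * g
  have hfg_int : Integrable (fun z => f z * g z) μ :=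
    hg.bdd_mul hfmeas.aestronglyMeasurable (Filter.Eventually.of_forall hfbd)
  -- ∫ f g = 0
  have hkey : ∫ z, f z * g z ∂μ = 0 := by
    by_contra hne
    have hpos : 0 < ‖∫ z, f z * g z ∂μ‖ := norm_pos_iff.mpr hne
    obtain ⟨hfm, hfb, happrox⟩ := hfRinf
    obtain ⟨rat, hrat, hclose⟩ := happrox 1 (fun _ => g) (fun _ => hg) _ hpos
    obtain ⟨p, q, hq, heq⟩ := hrat
    -- rat is a.e. bounded
    have hcont : ContinuousOn (fun z => p.eval z / q.eval z) K :=
      (p.continuous.continuousOn).div (q.continuous.continuousOn) hq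
    obtain ⟨C, hC⟩ := hK.exists_bound_of_continuousOn hcont
    have hratbd : ∀ᵐ z ∂μ, ‖rat z‖ ≤ C := by
      filter_upwards [haeK] with z hz
      rw [heq z hz]; exact hC z hz
    have hratm : AEStronglyMeasurable rat μ := by
      apply AEStronglyMeasurable.congr
        (f := fun z => p.eval z / q.eval z)
      · exact (p.continuous.measurable.div q.continuous.measurable).aestronglyMeasurable
      · filter_upwards [haeK] with z hz
        exact (heq z hz).symm
    have hratg_int : Integrable (fun z => rat z * g z) μ :=
      hg.bdd_mul hratm hratbd
    have h0 : ∫ z, rat z * g z ∂μ = 0 := hann rat ⟨p, q, hq, heq⟩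
    have := hclose 0
    rw [show (fun z => (f z - rat z) * g z) = fun z => f z * g z - rat z * g z by
          funext z; ring] at this
    rw [integral_sub hfg_int hratg_int, h0, sub_zero] at this
    exact lt_irrefl _ this
  -- compute ∫ f g explicitly
  have hπ : (0:ℝ) < 1 / (2 * Real.pi) := by positivity
  have hπ1 : 1 / (2 * Real.pi) ≤ 1 := by
    rw [div_le_one (by positivity)]
    linarith [Real.pi_gt_three]
  set c : ℂ := (((1 / (2 * Real.pi))^2 : ℝ) : ℂ) with hcdef
  have hae : (fun z => f z * g z) =ᵐ[μ] Set.indicator Δ (fun _ => c) := by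
    filter_upwards [hgg₁, hmod] with z hz1 hz2
    by_cases h : z ∈ Δ
    · have hnorm1 : ‖g₁ z‖ ≤ 1 := by rw [← hz1, hz2]; exact hπ1
      have hb : b z = (starRingEnd ℂ) (g z) := by
        simp only [hbdef]
        rw [if_pos hnorm1, hz1]
      rw [Set.indicator_of_mem h]
      rw [hfdef, Set.indicator_of_mem h, hb, RCLike.conj_mul, hz2, hcdef]
      norm_cast
    · simp [hfdef, Set.indicator, h]
  rw [integral_congr_ae hae, integral_indicator_const _ hΔm] at hkey
  have htoReal : (μ Δ).toReal ≠ 0 := by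
    have := measure_ne_top μ Δ
    simp [ENNReal.toReal_eq_zero_iff, hΔpos.ne', this]
  have hc0 : c ≠ 0 := by
    rw [hcdef]
    exact Complex.ofReal_ne_zero.mpr (by positivity)
  rw [smul_eq_zero] at hkey
  rcases hkey with h | h
  · exact htoReal (by exact_mod_cast h)
  · exact hc0 h
end
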